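/- arXiv:1903.02388 — 5 statements merged into one kernel-verified Lean document; each statement's English description precedes it below -/
import Mathlib

section
/- Let f : [0,1] → ℝ be a 1-Lipschitz function with 0 < f(x) ≤ 1 for all x, and let ε ∈ (0,1). Suppose 0 = t₀ < t₁ < ⋯ < t_m = 1 is a partition of [0,1] such that for every i < m one has t_{i+1} − t_i ≤ ε·f(t_i) and ε·f(t_i) ≤ 2(t_{i+1} − t_i). Then ((1 − ε)/ε)·∫₀¹ dx/f(x) ≤ m ≤ ((2 + ε)/ε)·∫₀¹ dx/f(x). -/
theorem stmt_2 (f : ℝ → ℝ)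
    (hlip : ∀ x ∈ Set.Icc (0:ℝ) 1, ∀ y ∈ Set.Icc (0:ℝ) 1, |f x - f y| ≤ |x - y|)
    (hpos : ∀ x ∈ Set.Icc (0:ℝ) 1, 0 < f x ∧ f x ≤ 1)
    (ε : ℝ) (hε : ε ∈ Set.Ioo (0:ℝ) 1)
    (m : ℕ) (hm : 0 < m) (t : ℕ → ℝ)
    (ht0 : t 0 = 0) (htm : t m = 1)
    (hmono : ∀ i < m, t i < t (i + 1))
    (hstop : ∀ i < m, t (i + 1) - t i ≤ ε * f (t i))
    (hparent : ∀ i < m, ε * f (t i) ≤ 2 * (t (i + 1) - t i)) :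
    ((1 - ε) / ε) * ∫ x in (0:ℝ)..1, 1 / f x ≤ (m : ℝ) ∧
    (m : ℝ) ≤ ((2 + ε) / ε) * ∫ x in (0:ℝ)..1, 1 / f x := by
  obtain ⟨hε0, hε1⟩ := hε
  have h1ε : (0:ℝ) < 1 - ε := by linarith
  have h2ε : (0:ℝ) < 2 + ε := by linarith
  -- monotonicity of t on [0, m]
  have htle : ∀ j, j ≤ m → ∀ i, i ≤ j → t i ≤ t j := by
    intro j hj
    induction j with
    | zero => intro i hi; simp [Nat.le_zero.mp hi]
    | succ k ih =>
      intro i hi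
      rcases eq_or_lt_of_le hi with rfl | h
      · exact le_rfl
      · exact le_trans (ih (le_trans (Nat.le_succ k) hj) i (Nat.lt_succ_iff.mp h))
          (le_of_lt (hmono k (Nat.lt_of_succ_le hj)))
  have hrange : ∀ i, i ≤ m → t i ∈ Set.Icc (0:ℝ) 1 := by
    intro i hi
    constructor
    · rw [← ht0]; exact htle i hi 0 (Nat.zero_le i)
    · rw [← htm]; exact htle m le_rfl i hi
  -- continuity / integrability of 1/f
  have hcf : ContinuousOn f (Set.Icc (0:ℝ) 1) := by
    have : LipschitzOnWith 1 f (Set.Icc (0:ℝ) 1) := by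
      apply LipschitzOnWith.of_dist_le_mul
      intro x hx y hy
      simpa [Real.dist_eq] using hlip x hx y hy
    exact this.continuousOn
  have hcinv : ContinuousOn (fun x => 1 / f x) (Set.Icc (0:ℝ) 1) :=
    continuousOn_const.div hcf (fun x hx => (hpos x hx).1.ne')
  have hint : ∀ i < m, IntervalIntegrable (fun x => 1 / f x) MeasureTheory.volume (t i) (t (i+1)) := by
    intro i hi
    apply (hcinv.mono _).intervalIntegrable
    rw [Set.uIcc_of_le (le_of_lt (hmono i hi))]
    exact Set.Icc_subset_Icc (hrange i (le_of_lt hi)).1 (hrange (i+1) hi).2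
  -- pointwise facts on each subinterval
  have hsub : ∀ i < m, ∀ x ∈ Set.Icc (t i) (t (i+1)), x ∈ Set.Icc (0:ℝ) 1 := by
    intro i hi x hx
    exact ⟨le_trans (hrange i (le_of_lt hi)).1 hx.1, le_trans hx.2 (hrange (i+1) hi).2⟩
  -- per-piece bounds
  have hup : ∀ i < m, (∫ x in t i..t (i+1), 1 / f x) ≤ ε / (1 - ε) := by
    intro i hi
    have hti : t i ∈ Set.Icc (0:ℝ) 1 := hrange i (le_of_lt hi)
    have hfi : 0 < f (t i) := (hpos _ hti).1
    have hδ : t (i+1) - t i ≤ ε * f (t i) := hstop i hi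
    have hbd : ∀ x ∈ Set.Icc (t i) (t (i+1)), 1 / f x ≤ 1 / ((1 - ε) * f (t i)) := by
      intro x hx
      have hx01 := hsub i hi x hx
      have hl := hlip (t i) hti x hx01
      have habs : |t i - x| = x - t i := by
        rw [abs_sub_comm, abs_of_nonneg (by linarith [hx.1])]
      have hflow : (1 - ε) * f (t i) ≤ f x := by
        have := abs_le.mp hl
        rw [habs] at this
        nlinarith [hx.2, this.1]
      exact one_div_le_one_div_of_le (by positivity) hflow
    calc (∫ x in t i..t (i+1), 1 / f x)
        ≤ ∫ x in t i..t (i+1), 1 / ((1 - ε) * f (t i)) :=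
          intervalIntegral.integral_mono_on (le_of_lt (hmono i hi)) (hint i hi)
            intervalIntegrable_const hbd
      _ = (t (i+1) - t i) * (1 / ((1 - ε) * f (t i))) := by
          simp [intervalIntegral.integral_const, smul_eq_mul]; ring
      _ ≤ (ε * f (t i)) * (1 / ((1 - ε) * f (t i))) := by
          apply mul_le_mul_of_nonneg_right hδ
          positivity
      _ = ε / (1 - ε) := by field_simp
  have hlo : ∀ i < m, ε / (2 + ε) ≤ ∫ x in t i..t (i+1), 1 / f x := by
    intro i hi
    have hti : t i ∈ Set.Icc (0:ℝ) 1 := hrange i (le_of_lt hi)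
    have hfi : 0 < f (t i) := (hpos _ hti).1
    have hδpos : 0 < t (i+1) - t i := sub_pos.mpr (hmono i hi)
    have hδ : ε * f (t i) ≤ 2 * (t (i+1) - t i) := hparent i hi
    set δ := t (i+1) - t i with hδdef
    have hbd : ∀ x ∈ Set.Icc (t i) (t (i+1)), ε / ((2 + ε) * δ) ≤ 1 / f x := by
      intro x hx
      have hx01 := hsub i hi x hx
      have hfx : 0 < f x := (hpos _ hx01).1
      have hl := hlip (t i) hti x hx01
      have habs : |t i - x| = x - t i := by
        rw [abs_sub_comm, abs_of_nonneg (by linarith [hx.1])]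
      have hfup : f x ≤ (2 + ε) * δ / ε := by
        have h' := abs_le.mp hl
        rw [habs] at h'
        have hxδ : x - t i ≤ δ := by simp only [hδdef]; linarith [hx.2]
        have h1 : f x ≤ f (t i) + δ := by linarith [h'.1]
        rw [le_div_iff₀ hε0]
        nlinarith [mul_le_mul_of_nonneg_right h1 hε0.le, hδ]
      have : ε / ((2 + ε) * δ) = 1 / ((2 + ε) * δ / ε) := by
        field_simp
      rw [this]
      exact one_div_le_one_div_of_le hfx hfup
    calc ε / (2 + ε) = δ * (ε / ((2 + ε) * δ)) := by
          field_simp [hδpos.ne', h2ε.ne']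
      _ = ∫ x in t i..t (i+1), ε / ((2 + ε) * δ) := by
          simp only [intervalIntegral.integral_const, smul_eq_mul, hδdef]
      _ ≤ ∫ x in t i..t (i+1), 1 / f x :=
          intervalIntegral.integral_mono_on (le_of_lt (hmono i hi))
            intervalIntegrable_const (hint i hi) hbd
  -- split the integral
  have hsplit : (∑ i ∈ Finset.range m, ∫ x in t i..t (i+1), 1 / f x) = ∫ x in (0:ℝ)..1, 1 / f x := by
    rw [intervalIntegral.sum_integral_adjacent_intervals (fun k hk => hint k hk), ht0, htm]
  set I := ∫ x in (0:ℝ)..1, 1 / f x with hI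
  have hIup : I ≤ m * (ε / (1 - ε)) := by
    rw [← hsplit]
    calc (∑ i ∈ Finset.range m, ∫ x in t i..t (i+1), 1 / f x)
        ≤ ∑ i ∈ Finset.range m, ε / (1 - ε) :=
          Finset.sum_le_sum (fun i hi => hup i (Finset.mem_range.mp hi))
      _ = m * (ε / (1 - ε)) := by
          rw [Finset.sum_const, Finset.card_range, nsmul_eq_mul]
  have hIlo : m * (ε / (2 + ε)) ≤ I := by
    rw [← hsplit]
    calc (m : ℝ) * (ε / (2 + ε)) = ∑ i ∈ Finset.range m, ε / (2 + ε) := by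
          rw [Finset.sum_const, Finset.card_range, nsmul_eq_mul]
      _ ≤ ∑ i ∈ Finset.range m, ∫ x in t i..t (i+1), 1 / f x :=
          Finset.sum_le_sum (fun i hi => hlo i (Finset.mem_range.mp hi))
  constructor
  · have := mul_le_mul_of_nonneg_left hIup (le_of_lt (div_pos h1ε hε0))
    calc ((1 - ε) / ε) * I ≤ ((1 - ε) / ε) * (m * (ε / (1 - ε))) := this
      _ = m := by field_simp
  · have := mul_le_mul_of_nonneg_left hIlo (le_of_lt (div_pos h2ε hε0))
    calc (m : ℝ) = ((2 + ε) / ε) * (m * (ε / (2 + ε))) := by field_simp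
      _ ≤ ((2 + ε) / ε) * I := this
end

section
/- For every natural number n ≥ 1 and every real r with 0 < r ≤ 1/4, one has ∫₀^{7r} sin^{n−1}(t) dt ≤ 16ⁿ · ∫₀^r sin^{n−1}(t) dt. -/
/-! Jordan's inequality `(2/π) t ≤ sin t ≤ t` on `[0, π/2]` squeezes `∫₀^b sin^m` between
`(2/π)^m b^{m+1}/(m+1)` and `b^{m+1}/(m+1)`, so enlarging the radius by a factor `c` multiplies
the integral by at most `c (cπ/2)^m`; for `c = 7` this is below `16^{m+1}` because `7π/2 < 16`. -/

open Real intervalIntegral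

namespace Real

variable {m : ℕ} {b : ℝ}

lemma integral_sin_pow_le (hb : 0 ≤ b) (hbπ : b ≤ π) :
    ∫ t in (0:ℝ)..b, sin t ^ m ≤ b ^ (m + 1) / (m + 1) := by
  have hmono : ∫ t in (0:ℝ)..b, sin t ^ m ≤ ∫ t in (0:ℝ)..b, t ^ m := by
    refine integral_mono_on hb ((continuous_sin.pow m).intervalIntegrable _ _)
      ((continuous_pow m).intervalIntegrable _ _) fun t ⟨ht0, htb⟩ => ?_
    exact pow_le_pow_left₀ (sin_nonneg_of_nonneg_of_le_pi ht0 (htb.trans hbπ)) (sin_le ht0) m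
  simpa [integral_pow] using hmono

lemma le_integral_sin_pow (hb : 0 ≤ b) (hbπ : b ≤ π / 2) :
    (2 / π) ^ m * (b ^ (m + 1) / (m + 1)) ≤ ∫ t in (0:ℝ)..b, sin t ^ m := by
  have hmono : ∫ t in (0:ℝ)..b, (2 / π * t) ^ m ≤ ∫ t in (0:ℝ)..b, sin t ^ m := by
    refine integral_mono_on hb (((continuous_const.mul continuous_id).pow m).intervalIntegrable _ _)
      ((continuous_sin.pow m).intervalIntegrable _ _) fun t ⟨ht0, htb⟩ => ?_
    exact pow_le_pow_left₀ (by positivity) (mul_le_sin ht0 (htb.trans hbπ)) m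
  simpa [mul_pow, integral_pow] using hmono

lemma integral_sin_pow_nonneg (hb : 0 ≤ b) (hbπ : b ≤ π) :
    0 ≤ ∫ t in (0:ℝ)..b, sin t ^ m :=
  integral_nonneg hb fun _ ⟨ht0, htb⟩ =>
    pow_nonneg (sin_nonneg_of_nonneg_of_le_pi ht0 (htb.trans hbπ)) m

lemma integral_sin_pow_mul_le {c r : ℝ} (hc : 0 ≤ c) (hr : 0 ≤ r) (hcr : c * r ≤ π)
    (hrπ : r ≤ π / 2) :
    ∫ t in (0:ℝ)..c * r, sin t ^ m ≤ c * (c * π / 2) ^ m * ∫ t in (0:ℝ)..r, sin t ^ m :=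
  calc ∫ t in (0:ℝ)..c * r, sin t ^ m
      ≤ (c * r) ^ (m + 1) / (m + 1) := integral_sin_pow_le (by positivity) hcr
    _ = c * (c * π / 2) ^ m * ((2 / π) ^ m * (r ^ (m + 1) / (m + 1))) := by
        rw [mul_pow, div_pow, div_pow, mul_pow, pow_succ, pow_succ]
        field_simp
    _ ≤ c * (c * π / 2) ^ m * ∫ t in (0:ℝ)..r, sin t ^ m := by
        gcongr
        exact le_integral_sin_pow hr hrπ

end Real

theorem stmt_5 (n : ℕ) (hn : 1 ≤ n) (r : ℝ) (hr : 0 < r) (hr' : r ≤ 1 / 4) :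
    (∫ t in (0:ℝ)..(7 * r), Real.sin t ^ (n - 1)) ≤
      16 ^ n * ∫ t in (0:ℝ)..r, Real.sin t ^ (n - 1) := by
  obtain ⟨m, rfl⟩ : ∃ m, n = m + 1 := ⟨n - 1, (Nat.sub_add_cancel hn).symm⟩
  rw [Nat.add_sub_cancel]
  have hπ : 3 < π := pi_gt_three
  have hconst : 7 * (7 * π / 2) ^ m ≤ (16 : ℝ) ^ (m + 1) := by
    rw [pow_succ']
    gcongr
    · norm_num
    · linarith [pi_le_four]
  calc ∫ t in (0:ℝ)..7 * r, sin t ^ m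
      ≤ 7 * (7 * π / 2) ^ m * ∫ t in (0:ℝ)..r, sin t ^ m :=
        integral_sin_pow_mul_le (by norm_num) hr.le (by linarith) (by linarith)
    _ ≤ 16 ^ (m + 1) * ∫ t in (0:ℝ)..r, sin t ^ m := by
        gcongr
        exact integral_sin_pow_nonneg hr.le (by linarith)
end

section
/- Let E be a finite-dimensional real inner product space and W ⊆ E a nonempty compact subset. Define the medial axis Δ_W := {x ∈ E : ∃ p, q ∈ W, p ≠ q, ‖x − p‖ = ‖x − q‖ = d_W(x)}, where d_W(x) := inf_{p ∈ W} ‖x − p‖. Then: (1) for every x ∈ E ∖ Δ_W there exists a unique point π_W(x) ∈ W with ‖x − π_W(x)‖ = d_W(x); (2) the map π_W is continuous on the open set T′(W) := E ∖ closure(Δ_W): if (x_k) is a sequence in T′(W) converging to x ∈ T′(W), then π_W(x_k) → π_W(x). -/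
open Topology


/-- The medial axis of a set `W`: points having at least two distinct nearest points in `W`. -/
def medialAxis {E : Type*} [NormedAddCommGroup E] [InnerProductSpace ℝ E] (W : Set E) : Set E :=
  {x | ∃ p ∈ W, ∃ q ∈ W, p ≠ q ∧ ‖x - p‖ = Metric.infDist x W ∧ ‖x - q‖ = Metric.infDist x W}

theorem stmt_7 {E : Type*} [NormedAddCommGroup E] [InnerProductSpace ℝ E]
    [FiniteDimensional ℝ E] (W : Set E) (hW : IsCompact W) (hWne : W.Nonempty) :
    (∀ x ∉ medialAxis W, ∃! p, p ∈ W ∧ ‖x - p‖ = Metric.infDist x W) ∧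
    ∀ π : E → E,
      (∀ x ∈ (closure (medialAxis W))ᶜ, π x ∈ W ∧ ‖x - π x‖ = Metric.infDist x W) →
      ContinuousOn π (closure (medialAxis W))ᶜ := by
  have huniq : ∀ x ∉ medialAxis W, ∀ p, (p ∈ W ∧ ‖x - p‖ = Metric.infDist x W) →
      ∀ q, (q ∈ W ∧ ‖x - q‖ = Metric.infDist x W) → p = q := by
    intro x hx p ⟨hpW, hpd⟩ q ⟨hqW, hqd⟩
    by_contra hne
    exact hx ⟨p, hpW, q, hqW, hne, hpd, hqd⟩
  have hexu : ∀ x ∉ medialAxis W, ∃! p, p ∈ W ∧ ‖x - p‖ = Metric.infDist x W := by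
    intro x hx
    obtain ⟨p, hpW, hpd⟩ := hW.exists_infDist_eq_dist hWne x
    rw [dist_eq_norm] at hpd
    exact ⟨p, ⟨hpW, hpd.symm⟩, fun q hq => huniq x hx q hq p ⟨hpW, hpd.symm⟩⟩
  refine ⟨hexu, ?_⟩
  intro π hπ
  intro x hx
  have hxnm : x ∉ medialAxis W := fun h => hx (subset_closure h)
  rw [ContinuousWithinAt]
  apply Filter.tendsto_of_subseq_tendsto
  intro ns hns
  have hmem : ∀ᶠ n in Filter.atTop, ns n ∈ (closure (medialAxis W))ᶜ :=
    hns.eventually (eventually_mem_nhdsWithin)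
  have hfreq : ∃ᶠ n in Filter.atTop, π (ns n) ∈ W :=
    (hmem.mono fun n hn => (hπ (ns n) hn).1).frequently
  obtain ⟨a, haW, φ, hφ, hconv⟩ := hW.tendsto_subseq' hfreq
  have hns' : Filter.Tendsto (fun n => ns (φ n)) Filter.atTop (𝓝 x) :=
    (hns.mono_right nhdsWithin_le_nhds).comp hφ.tendsto_atTop
  -- the subsequence eventually satisfies the nearest-point identity
  have heq : ∀ᶠ n in Filter.atTop,
      ‖ns (φ n) - π (ns (φ n))‖ = Metric.infDist (ns (φ n)) W :=
    (hφ.tendsto_atTop.eventually hmem).mono fun n hn => (hπ _ hn).2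
  have h1 : Filter.Tendsto (fun n => ‖ns (φ n) - π (ns (φ n))‖) Filter.atTop (𝓝 ‖x - a‖) :=
    (hns'.sub hconv).norm
  have h2 : Filter.Tendsto (fun n => Metric.infDist (ns (φ n)) W) Filter.atTop
      (𝓝 (Metric.infDist x W)) :=
    ((Metric.continuous_infDist_pt W).tendsto x).comp hns'
  have hkey : ‖x - a‖ = Metric.infDist x W :=
    tendsto_nhds_unique (h1.congr' heq) h2
  have hax : a = π x :=
    huniq x hxnm a ⟨haW, hkey⟩ (π x) (hπ x hx)
  exact ⟨φ, hax ▸ hconv⟩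
end

section
/- Let E be a real inner product space, W ⊆ E a nonempty closed subset, p ∈ W, and u ∈ E with ‖u‖ = 1. Suppose there exists s > 0 with d_W(p + s·u) = s, where d_W(x) := inf_{q∈W} ‖x − q‖. Then for every t with 0 ≤ t < s: d_W(p + t·u) = t, and p is the unique point q ∈ W with ‖(p + t·u) − q‖ = t; that is, π_W(p + t·u) = p. -/
theorem stmt_13 {E : Type*} [NormedAddCommGroup E] [InnerProductSpace ℝ E]
    (W : Set E) (hWcl : IsClosed W) (hWne : W.Nonempty)
    (p : E) (hp : p ∈ W) (u : E) (hu : ‖u‖ = 1)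
    (s : ℝ) (hs : 0 < s) (hds : Metric.infDist (p + s • u) W = s) :
    ∀ t : ℝ, 0 ≤ t → t < s →
      Metric.infDist (p + t • u) W = t ∧
      ∀ q ∈ W, ‖(p + t • u) - q‖ = t → q = p := by
  intro t ht hts
  have hdtp : dist (p + t • u) p = t := by
    simp [dist_eq_norm, norm_smul, hu, abs_of_nonneg ht]
  have hst : (0:ℝ) < s - t := by linarith
  have hsub : (p + s • u) - (p + t • u) = (s - t) • u := by
    rw [sub_smul]; abel
  have hdst : ‖(p + s • u) - (p + t • u)‖ = s - t := by
    rw [hsub, norm_smul, hu]; simp [abs_of_pos hst]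
  have key : ∀ q ∈ W, t ≤ ‖(p + t • u) - q‖ := by
    intro q hq
    have h1 : s ≤ dist (p + s • u) q :=
      hds.symm.trans_le (Metric.infDist_le_dist_of_mem hq)
    have h2 : dist (p + s • u) q ≤ (s - t) + ‖(p + t • u) - q‖ := by
      calc dist (p + s • u) q ≤ dist (p + s • u) (p + t • u) + dist (p + t • u) q :=
            dist_triangle _ _ _
        _ = (s - t) + ‖(p + t • u) - q‖ := by rw [dist_eq_norm, hdst, dist_eq_norm]
    linarith
  have hle : Metric.infDist (p + t • u) W ≤ t :=
    (Metric.infDist_le_dist_of_mem hp).trans_eq hdtp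
  have hge : t ≤ Metric.infDist (p + t • u) W := by
    by_contra h
    push_neg at h
    obtain ⟨y, hy, hdy⟩ := (Metric.infDist_lt_iff hWne).1 h
    rw [dist_eq_norm] at hdy
    exact absurd (key y hy) (not_le.2 hdy)
  refine ⟨le_antisymm hle hge, ?_⟩
  intro q hq hqt
  rcases eq_or_lt_of_le ht with ht0 | ht0
  · have h0 : ‖p - q‖ = 0 := by simpa [← ht0] using hqt
    exact (sub_eq_zero.mp (norm_eq_zero.mp h0)).symm
  · -- equality in the triangle inequality
    set a := (s - t) • u with ha
    set b := (p + t • u) - q with hb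
    have hab : a + b = (p + s • u) - q := by
      rw [ha, hb, sub_smul]; abel
    have h1 : s ≤ ‖a + b‖ := by
      rw [hab, ← dist_eq_norm]
      exact hds.symm.trans_le (Metric.infDist_le_dist_of_mem hq)
    have hna : ‖a‖ = s - t := by rw [ha, norm_smul, hu]; simp [abs_of_pos hst]
    have h2 : ‖a + b‖ ≤ ‖a‖ + ‖b‖ := norm_add_le _ _
    have heq : ‖a + b‖ = ‖a‖ + ‖b‖ := by
      rw [hna, hb, hqt] at h2 ⊢
      linarith
    have hray : SameRay ℝ a b := sameRay_iff_norm_add.2 heq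
    have ha0 : a ≠ 0 := by
      intro h; rw [h, norm_zero] at hna; linarith
    obtain ⟨r, hr, hrab⟩ := hray.exists_nonneg_left ha0
    have hnb : ‖b‖ = t := hqt
    have hr' : r * (s - t) = t := by
      have : ‖r • a‖ = ‖b‖ := by rw [hrab]
      rwa [norm_smul, Real.norm_eq_abs, abs_of_nonneg hr, hna, hnb] at this
    have hbt : b = t • u := by
      rw [← hrab, ha, smul_smul, hr']
    have : (p + t • u) - q = t • u := hbt
    have := sub_eq_iff_eq_add.mp this
    -- p + t•u = t•u + q
    have : p = q := by
      have h := this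
      apply add_right_cancel (b := t • u)
      rw [h]; abel
    exact this.symm
end

section
/- Let f : [0,1] → ℝ be a 1-Lipschitz function with 0 < f(x) ≤ 1 for all x ∈ [0,1], let ε > 0, and let k ∈ ℕ be such that 2^{−k} ≤ ε · f(x) for every x ∈ [0,1]. Then inf_{x∈[0,1]} f(x) ≤ min_{0 ≤ i ≤ 2^k} f(i·2^{−k}) ≤ (1 + ε) · inf_{x∈[0,1]} f(x). -/
/-!
The infimum of `f` over `[0,1]` is attained at some `x₀`, since a Lipschitz function is
continuous on the compact interval. The grid point next to `x₀` lies within `2^{-k}` of it, so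
by the Lipschitz bound its value is at most `f x₀ + 2^{-k} ≤ (1 + ε) f x₀`.
-/

open Set

lemma natCast_div_mem_Icc (N : ℕ) (i : Fin (N + 1)) : ((i : ℕ) : ℝ) / N ∈ Icc (0 : ℝ) 1 :=
  ⟨by positivity, div_le_one_of_le₀ (by exact_mod_cast Fin.is_le i) N.cast_nonneg⟩

lemma exists_dist_natCast_div_le {N : ℕ} (hN : 0 < N) {x : ℝ} (hx : x ∈ Icc (0 : ℝ) 1) :
    ∃ i : Fin (N + 1), dist (((i : ℕ) : ℝ) / N) x ≤ (N : ℝ)⁻¹ := by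
  have hN' : (0 : ℝ) < N := by exact_mod_cast hN
  have hxN : 0 ≤ x * N := mul_nonneg hx.1 hN'.le
  have hfloor_le : (⌊x * N⌋₊ : ℝ) ≤ x * N := Nat.floor_le hxN
  have hlt_floor : x * N < ⌊x * N⌋₊ + 1 := Nat.lt_floor_add_one _
  have hfloor_le_N : ⌊x * N⌋₊ ≤ N :=
    Nat.floor_le_of_le (by simpa using mul_le_of_le_one_left hN'.le hx.2)
  refine ⟨⟨⌊x * N⌋₊, Nat.lt_succ_of_le hfloor_le_N⟩, ?_⟩
  have hscale : (⌊x * N⌋₊ : ℝ) / N - x = (⌊x * N⌋₊ - x * N) * (N : ℝ)⁻¹ := by field_simp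
  rw [Real.dist_eq, Fin.val_mk, hscale, abs_mul, abs_inv, abs_of_pos hN']
  refine mul_le_of_le_one_left (inv_nonneg.2 hN'.le) (abs_le.2 ⟨?_, ?_⟩) <;> linarith

lemma LipschitzOnWith.ciInf_comp_le_add {α ι : Type*} [PseudoMetricSpace α] [Finite ι]
    {f : α → ℝ} {s : Set α} {p : ι → α} (hf : LipschitzOnWith 1 f s)
    (hp : ∀ i, p i ∈ s) {x : α} (hx : x ∈ s) {δ : ℝ} (hnear : ∃ i, dist (p i) x ≤ δ) :
    ⨅ i, f (p i) ≤ f x + δ := by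
  obtain ⟨i, hi⟩ := hnear
  calc ⨅ i, f (p i) ≤ f (p i) := ciInf_le (Set.finite_range _).bddBelow i
    _ ≤ f x + dist (p i) x := by simpa using hf.le_add_mul (hp i) hx
    _ ≤ f x + δ := by gcongr

theorem stmt_15_general (f : ℝ → ℝ)
    (hlip : ∀ x ∈ Set.Icc (0:ℝ) 1, ∀ y ∈ Set.Icc (0:ℝ) 1, |f x - f y| ≤ |x - y|)
    (ε : ℝ)
    (k : ℕ) (hk : ∀ x ∈ Set.Icc (0:ℝ) 1, (2:ℝ) ^ (-(k:ℤ)) ≤ ε * f x) :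
    sInf (f '' Set.Icc (0:ℝ) 1) ≤
      (⨅ i : Fin (2 ^ k + 1), f ((i : ℕ) * (2:ℝ) ^ (-(k:ℤ)))) ∧
    (⨅ i : Fin (2 ^ k + 1), f ((i : ℕ) * (2:ℝ) ^ (-(k:ℤ)))) ≤
      (1 + ε) * sInf (f '' Set.Icc (0:ℝ) 1) := by
  have hf : LipschitzOnWith 1 f (Icc 0 1) :=
    LipschitzOnWith.of_dist_le_mul fun x hx y hy => by simpa [Real.dist_eq] using hlip x hx y hy
  have hgrid (i : Fin (2 ^ k + 1)) :
      ((i : ℕ) : ℝ) * (2:ℝ) ^ (-(k:ℤ)) = (i : ℕ) / ((2 ^ k : ℕ) : ℝ) := by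
    simp [zpow_neg, div_eq_mul_inv]
  have himage : IsCompact (f '' Icc 0 1) := isCompact_Icc.image_of_continuousOn hf.continuousOn
  obtain ⟨x₀, hx₀, hmin⟩ := himage.sInf_mem ((nonempty_Icc.2 zero_le_one).image f)
  simp only [hgrid]
  constructor
  · exact le_ciInf fun i => csInf_le himage.bddBelow ⟨_, natCast_div_mem_Icc _ i, rfl⟩
  · rw [← hmin]
    calc _ ≤ f x₀ + ((2 ^ k : ℕ) : ℝ)⁻¹ :=
          hf.ciInf_comp_le_add (natCast_div_mem_Icc _) hx₀
            (exists_dist_natCast_div_le (by positivity) hx₀)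
      _ ≤ (1 + ε) * f x₀ := by linarith [hk x₀ hx₀, show ((2 ^ k : ℕ) : ℝ)⁻¹ = 2 ^ (-(k:ℤ)) by simp]

theorem stmt_15 (f : ℝ → ℝ)
    (hlip : ∀ x ∈ Set.Icc (0:ℝ) 1, ∀ y ∈ Set.Icc (0:ℝ) 1, |f x - f y| ≤ |x - y|)
    (hpos : ∀ x ∈ Set.Icc (0:ℝ) 1, 0 < f x ∧ f x ≤ 1)
    (ε : ℝ) (hε : 0 < ε)
    (k : ℕ) (hk : ∀ x ∈ Set.Icc (0:ℝ) 1, (2:ℝ) ^ (-(k:ℤ)) ≤ ε * f x) :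
    sInf (f '' Set.Icc (0:ℝ) 1) ≤
      (⨅ i : Fin (2 ^ k + 1), f ((i : ℕ) * (2:ℝ) ^ (-(k:ℤ)))) ∧
    (⨅ i : Fin (2 ^ k + 1), f ((i : ℕ) * (2:ℝ) ^ (-(k:ℤ)))) ≤
      (1 + ε) * sInf (f '' Set.Icc (0:ℝ) 1) :=
  stmt_15_general f hlip ε k hk
end
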